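/- In BS(1,−1) = ⟨a, b | b a b⁻¹ = a⁻¹⟩, for x ≠ 0 the set {aˣ, a⁻ˣ} is a totally symmetric set of size 2, and every totally symmetric set in BS(1,−1) has size at most 2. -/

import Mathlib

/-- A totally symmetric set in a group `G`: a finite set of pairwise commuting
elements such that every permutation of the set is realized by conjugation. -/
def IsTotallySymmetric {G : Type*} [Group G] (S : Finset G) : Prop :=
  (∀ x ∈ S, ∀ y ∈ S, x * y = y * x) ∧
  ∀ σ : Equiv.Perm S, ∃ g : G, ∀ x : S, g * ↑x * g⁻¹ = ↑(σ x)


/-- Relators of the Baumslag–Solitar group `BS(1,n) = ⟨a, b ∣ b a b⁻¹ = aⁿ⟩`,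
with `a = of 0` and `b = of 1`. -/
def BSRel (n : ℤ) : Set (FreeGroup (Fin 2)) :=
  {FreeGroup.of 1 * FreeGroup.of 0 * (FreeGroup.of 1)⁻¹ * (FreeGroup.of 0 ^ n)⁻¹}

namespace BSAux

abbrev Z := Multiplicative ℤ
def ι : MulAut Z := MulEquiv.inv Z
lemma ι_apply (v : Z) : ι v = v⁻¹ := rfl
lemma ι_sq : ι * ι = 1 := by ext v; simp [ι]
def φ : Z →* MulAut Z := zpowersHom _ ι
abbrev K := SemidirectProduct Z Z φ

lemma phi_even {h : Z} (he : Even h.toAdd) : φ h = 1 := by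
  obtain ⟨k, hk⟩ := he
  have h0 : φ h = ι ^ h.toAdd := rfl
  rw [h0, hk]
  have : k + k = 2 * k := by ring
  rw [this, zpow_mul]
  have h2 : ι ^ (2:ℤ) = ι * ι := by rw [zpow_two]
  rw [h2, ι_sq, one_zpow]

lemma phi_odd {h : Z} (he : Odd h.toAdd) : φ h = ι := by
  obtain ⟨k, hk⟩ := he
  have h0 : φ h = ι ^ h.toAdd := rfl
  rw [h0, hk, zpow_add, zpow_mul]
  have h2 : ι ^ (2:ℤ) = ι * ι := by rw [zpow_two]
  rw [h2, ι_sq, one_zpow, one_mul, zpow_one]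

lemma conj_coords (g w : K) :
    g * w * g⁻¹ = ⟨g.left * φ g.right w.left * (φ w.right g.left)⁻¹, w.right⟩ := by
  have key : ∀ u v x : Z, (φ u) ((φ v) ((φ u)⁻¹ x)) = φ v x := by
    intro u v x
    have h1 : (φ u) ((φ v) ((φ u)⁻¹ x)) = (φ u * φ v * (φ u)⁻¹) x := rfl
    rw [h1, ← map_inv, ← map_mul, ← map_mul, mul_comm u v, mul_inv_cancel_right]
  ext
  · simp [SemidirectProduct.mul_left, SemidirectProduct.mul_right,
      SemidirectProduct.inv_left, SemidirectProduct.inv_right, map_mul, mul_comm, mul_assoc,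
      mul_left_comm, key]
    exact key _ _ _
  · simp [SemidirectProduct.mul_right, SemidirectProduct.inv_right, mul_comm]

lemma Zext {u v : Z} (h : u.toAdd = v.toAdd) : u = v := Multiplicative.toAdd.injective h

/-- The key fact: in `K` there is no "totally symmetric triple". -/
lemma klemma (x y z g₁ g₂ : K) (hxy : x ≠ y)
    (hc : x * y = y * x)
    (e1 : g₁ * x * g₁⁻¹ = y) (e3 : g₁ * z * g₁⁻¹ = z)
    (f1 : g₂ * x * g₂⁻¹ = z) (f3 : g₂ * y * g₂⁻¹ = y) : False := by
  rw [conj_coords] at e1 e3 f1 f3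
  have hr1 : y.right = x.right := by rw [← e1]
  have hr2 : z.right = x.right := by rw [← f1]
  have hxyne : x.left ≠ y.left := by
    intro h
    exact hxy (SemidirectProduct.ext h hr1.symm)
  have he1 : g₁.left * φ g₁.right x.left * (φ x.right g₁.left)⁻¹ = y.left :=
    congrArg SemidirectProduct.left e1
  have he3 : g₁.left * φ g₁.right z.left * (φ z.right g₁.left)⁻¹ = z.left :=
    congrArg SemidirectProduct.left e3
  have hf1 : g₂.left * φ g₂.right x.left * (φ x.right g₂.left)⁻¹ = z.left :=
    congrArg SemidirectProduct.left f1
  have hf3 : g₂.left * φ g₂.right y.left * (φ y.right g₂.left)⁻¹ = y.left :=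
    congrArg SemidirectProduct.left f3
  rcases Int.even_or_odd x.right.toAdd with hpar | hpar
  · -- x.right even
    have hφx : φ x.right = 1 := phi_even hpar
    have hφy : φ y.right = 1 := by rw [hr1]; exact hφx
    have hφz : φ z.right = 1 := by rw [hr2]; exact hφx
    simp only [hφx, hφy, hφz, MulAut.one_apply] at he1 he3 hf1 hf3
    rcases Int.even_or_odd g₁.right.toAdd with hp1 | hp1
    · have hφg : φ g₁.right = 1 := phi_even hp1
      rw [hφg, MulAut.one_apply] at he1
      apply hxyne
      apply Zext
      have := congrArg Multiplicative.toAdd he1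
      simp only [toAdd_mul, toAdd_inv] at this ⊢
      omega
    · have hφg : φ g₁.right = ι := phi_odd hp1
      rw [hφg, ι_apply] at he1 he3
      have hz1 : z.left.toAdd = 0 := by
        have := congrArg Multiplicative.toAdd he3
        simp only [toAdd_mul, toAdd_inv] at this; omega
      have hy1 : y.left.toAdd = -x.left.toAdd := by
        have := congrArg Multiplicative.toAdd he1
        simp only [toAdd_mul, toAdd_inv] at this; omega
      rcases Int.even_or_odd g₂.right.toAdd with hp2 | hp2
      · have hφg2 : φ g₂.right = 1 := phi_even hp2
        rw [hφg2, MulAut.one_apply] at hf1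
        have hx1 : x.left.toAdd = z.left.toAdd := by
          have := congrArg Multiplicative.toAdd hf1
          simp only [toAdd_mul, toAdd_inv] at this; omega
        exact hxyne (Zext (by omega))
      · have hφg2 : φ g₂.right = ι := phi_odd hp2
        rw [hφg2, ι_apply] at hf3
        have hy0 : y.left.toAdd = 0 := by
          have := congrArg Multiplicative.toAdd hf3
          simp only [toAdd_mul, toAdd_inv] at this; omega
        exact hxyne (Zext (by omega))
  · -- x.right odd : commuting forces x = y
    have hφx : φ x.right = ι := phi_odd hpar
    have hφy : φ y.right = ι := by rw [hr1]; exact hφx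
    have hcl : x.left * φ x.right y.left = y.left * φ y.right x.left := by
      have h1 : (x * y).left = (y * x).left := by rw [hc]
      simpa [SemidirectProduct.mul_left] using h1
    rw [hφx, hφy, ι_apply, ι_apply] at hcl
    apply hxyne
    apply Zext
    have := congrArg Multiplicative.toAdd hcl
    simp only [toAdd_mul, toAdd_inv] at this
    omega

abbrev PG := PresentedGroup (BSRel (-1))

def a : PG := PresentedGroup.of 0
def b : PG := PresentedGroup.of 1

lemma rel : b * a * b⁻¹ = a⁻¹ := by
  have hmem : (FreeGroup.of 1 * FreeGroup.of 0 * (FreeGroup.of 1)⁻¹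
      * ((FreeGroup.of 0 : FreeGroup (Fin 2)) ^ (-1 : ℤ))⁻¹) ∈
        Subgroup.normalClosure (BSRel (-1)) :=
    Subgroup.subset_normalClosure rfl
  have h1 : PresentedGroup.mk (BSRel (-1)) (FreeGroup.of 1 * FreeGroup.of 0 * (FreeGroup.of 1)⁻¹
      * ((FreeGroup.of 0 : FreeGroup (Fin 2)) ^ (-1 : ℤ))⁻¹) = 1 :=
    (QuotientGroup.eq_one_iff _).2 hmem
  simp only [map_mul, map_inv, map_zpow] at h1
  have h2 : b * a * b⁻¹ * (a ^ (-1 : ℤ))⁻¹ = 1 := h1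
  rw [zpow_neg_one, inv_inv] at h2
  exact mul_eq_one_iff_eq_inv.mp h2

lemma rel' : b * a⁻¹ * b⁻¹ = a := by
  calc b * a⁻¹ * b⁻¹ = (b * a * b⁻¹)⁻¹ := by group
    _ = a⁻¹⁻¹ := by rw [rel]
    _ = a := inv_inv a

lemma phi_one : φ (Multiplicative.ofAdd (1:ℤ)) = ι := by
  have : φ (Multiplicative.ofAdd (1:ℤ)) = ι ^ (1:ℤ) := rfl
  rw [this, zpow_one]

lemma conj_b (m : ℤ) : b * a ^ m * b⁻¹ = a ^ (-m) := by
  rw [← conj_zpow, rel, inv_zpow, ← zpow_neg]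

lemma comm_b2 : Commute (b ^ (2:ℤ)) a := by
  have h : b ^ (2:ℤ) = b * b := by rw [zpow_two]
  unfold Commute SemiconjBy
  rw [h]
  have : b * b * a * (b * b)⁻¹ = a := by
    calc b * b * a * (b * b)⁻¹ = b * (b * a * b⁻¹) * b⁻¹ := by group
      _ = b * a⁻¹ * b⁻¹ := by rw [rel]
      _ = a := rel'
  calc b * b * a = (b * b * a * (b*b)⁻¹) * (b * b) := by group
    _ = a * (b * b) := by rw [this]

lemma conjb_even (k : ℤ) : b ^ (2 * k) * a * (b ^ (2 * k))⁻¹ = a := by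
  have hcomm : Commute (b ^ (2 * k)) a := by
    rw [zpow_mul]
    exact (comm_b2.zpow_left k)
  rw [hcomm.eq]
  group

lemma conjb_odd (k : ℤ) : b ^ (2 * k + 1) * a * (b ^ (2 * k + 1))⁻¹ = a⁻¹ := by
  have h1 : b ^ (2 * k + 1) * a * (b ^ (2 * k + 1))⁻¹
      = b ^ (2 * k) * (b * a * b⁻¹) * (b ^ (2 * k))⁻¹ := by group
  rw [h1, rel]
  have h2 : b ^ (2 * k) * a⁻¹ * (b ^ (2 * k))⁻¹ = (b ^ (2 * k) * a * (b ^ (2 * k))⁻¹)⁻¹ := by group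
  rw [h2, conjb_even]

/-- the homomorphism PG →* K -/
def toK : PG →* K :=
  PresentedGroup.toGroup (f := fun i : Fin 2 =>
    if i = 0 then SemidirectProduct.inl (Multiplicative.ofAdd (1:ℤ))
    else SemidirectProduct.inr (Multiplicative.ofAdd (1:ℤ)))
    (by
      rintro r hr
      have : r = FreeGroup.of 1 * FreeGroup.of 0 * (FreeGroup.of 1)⁻¹
          * ((FreeGroup.of 0 : FreeGroup (Fin 2)) ^ (-1:ℤ))⁻¹ := hr
      subst this
      simp only [map_mul, map_inv, map_zpow, FreeGroup.lift_apply_of]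
      norm_num
      ext <;>
      simp [SemidirectProduct.mul_left, SemidirectProduct.mul_right,
        SemidirectProduct.inv_left, SemidirectProduct.inv_right, phi_one, ι_apply])

lemma toK_a : toK a = SemidirectProduct.inl (Multiplicative.ofAdd (1:ℤ)) := by
  simp [toK, a, PresentedGroup.toGroup.of]

lemma toK_b : toK b = SemidirectProduct.inr (Multiplicative.ofAdd (1:ℤ)) := by
  simp [toK, b, PresentedGroup.toGroup.of]

def fromK : K →* PG :=
  SemidirectProduct.lift (zpowersHom PG a) (zpowersHom PG b) (by
    intro g
    apply MonoidHom.ext_mint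
    simp only [MonoidHom.comp_apply, MulEquiv.coe_toMonoidHom, MulAut.conj_apply,
      zpowersHom_apply, toAdd_ofAdd, zpow_one]
    rcases Int.even_or_odd g.toAdd with hp | hp
    · rw [phi_even hp]
      obtain ⟨k, hk⟩ := hp
      have hk' : g.toAdd = 2 * k := by omega
      rw [MulAut.one_apply]
      simp only [toAdd_ofAdd, zpow_one, hk']
      exact (conjb_even k).symm
    · rw [phi_odd hp]
      obtain ⟨k, hk⟩ := hp
      rw [ι_apply]
      simp only [toAdd_inv, toAdd_ofAdd, hk]
      calc a ^ (-1:ℤ) = a⁻¹ := by group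
        _ = b ^ (2*k+1) * a * (b ^ (2*k+1))⁻¹ := (conjb_odd k).symm)

lemma fromK_toK : ∀ x : PG, fromK (toK x) = x := by
  have h : fromK.comp toK = MonoidHom.id PG := by
    ext i
    fin_cases i
    · show fromK (toK a) = a
      rw [toK_a]
      simp [fromK, a]
    · show fromK (toK b) = b
      rw [toK_b]
      simp [fromK, b]
  intro x
  calc fromK (toK x) = (fromK.comp toK) x := rfl
    _ = x := by rw [h]; rfl

lemma toK_inj : Function.Injective toK :=
  Function.LeftInverse.injective fromK_toK

lemma commz (m n : ℤ) : (a : PG) ^ m * a ^ n = a ^ n * a ^ m := by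
  rw [← zpow_add, ← zpow_add, add_comm]

lemma pow_ne {x : ℤ} (hx : x ≠ 0) : (a : PG) ^ x ≠ a ^ (-x) := by
  intro h
  apply hx
  have h1 := congrArg toK h
  rw [map_zpow, map_zpow, toK_a, ← map_zpow (SemidirectProduct.inl (φ := φ)),
    ← map_zpow (SemidirectProduct.inl (φ := φ))] at h1
  have h2 := SemidirectProduct.inl_injective h1
  have h3 := congrArg Multiplicative.toAdd h2
  simp only [toAdd_zpow, toAdd_ofAdd, smul_eq_mul, mul_one] at h3
  omega

end BSAux

theorem stmt_8 [DecidableEq (PresentedGroup (BSRel (-1)))] :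
    (∀ x : ℤ, x ≠ 0 →
      IsTotallySymmetric ({(PresentedGroup.of 0 : PresentedGroup (BSRel (-1))) ^ x,
          (PresentedGroup.of 0 : PresentedGroup (BSRel (-1))) ^ (-x)} :
        Finset (PresentedGroup (BSRel (-1)))) ∧
      ({(PresentedGroup.of 0 : PresentedGroup (BSRel (-1))) ^ x,
          (PresentedGroup.of 0 : PresentedGroup (BSRel (-1))) ^ (-x)} :
        Finset (PresentedGroup (BSRel (-1)))).card = 2) ∧
    ∀ S : Finset (PresentedGroup (BSRel (-1))),
      IsTotallySymmetric S → S.card ≤ 2 := by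
  constructor
  · intro x hx
    have hne : (BSAux.a : BSAux.PG) ^ x ≠ BSAux.a ^ (-x) := BSAux.pow_ne hx
    refine ⟨⟨?_, ?_⟩, Finset.card_pair hne⟩
    · intro u hu v hv
      have hu' : u = BSAux.a ^ x ∨ u = BSAux.a ^ (-x) := by
        simpa [Finset.mem_insert, Finset.mem_singleton, BSAux.a] using hu
      have hv' : v = BSAux.a ^ x ∨ v = BSAux.a ^ (-x) := by
        simpa [Finset.mem_insert, Finset.mem_singleton, BSAux.a] using hv
      rcases hu' with rfl | rfl <;> rcases hv' with rfl | rfl <;> exact BSAux.commz _ _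
    · intro σ
      set S : Finset BSAux.PG := {BSAux.a ^ x, BSAux.a ^ (-x)} with hSdef
      let U : S := ⟨BSAux.a ^ x, Finset.mem_insert_self _ _⟩
      let V : S := ⟨BSAux.a ^ (-x), Finset.mem_insert_of_mem (Finset.mem_singleton_self _)⟩
      have hUV : U ≠ V := fun h => hne (congrArg Subtype.val h)
      have hmem : ∀ w : S, w = U ∨ w = V := by
        rintro ⟨w, hw⟩
        rcases Finset.mem_insert.mp hw with h | h
        · exact Or.inl (Subtype.ext h)
        · exact Or.inr (Subtype.ext (Finset.mem_singleton.mp h))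
      rcases hmem (σ U) with h1 | h1
      · have h2 : σ V = V := by
          rcases hmem (σ V) with h | h
          · exact absurd (σ.injective (h.trans h1.symm)) (fun hh => hUV hh.symm)
          · exact h
        refine ⟨1, fun w => ?_⟩
        rcases hmem w with rfl | rfl
        · rw [h1]; group
        · rw [h2]; group
      · have h2 : σ V = U := by
          rcases hmem (σ V) with h | h
          · exact h
          · exact absurd (σ.injective (h1.trans h.symm)) hUV
        refine ⟨BSAux.b, fun w => ?_⟩
        rcases hmem w with rfl | rfl
        · rw [h1]
          exact BSAux.conj_b x
        · rw [h2]
          show BSAux.b * BSAux.a ^ (-x) * BSAux.b⁻¹ = BSAux.a ^ x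
          rw [BSAux.conj_b, neg_neg]
  · intro S hS
    by_contra hcard
    push_neg at hcard
    obtain ⟨x, hxS, y, hyS, z, hzS, hxy, hxz, hyz⟩ := Finset.two_lt_card.mp hcard
    let X : S := ⟨x, hxS⟩
    let Y : S := ⟨y, hyS⟩
    let Zc : S := ⟨z, hzS⟩
    have hXY : X ≠ Y := fun h => hxy (congrArg Subtype.val h)
    have hXZ : X ≠ Zc := fun h => hxz (congrArg Subtype.val h)
    have hYZ : Y ≠ Zc := fun h => hyz (congrArg Subtype.val h)
    obtain ⟨g₁, hg₁⟩ := hS.2 (Equiv.swap X Y)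
    obtain ⟨g₂, hg₂⟩ := hS.2 (Equiv.swap X Zc)
    have e1 : g₁ * x * g₁⁻¹ = y := by
      have := hg₁ X
      rwa [Equiv.swap_apply_left] at this
    have e3 : g₁ * z * g₁⁻¹ = z := by
      have := hg₁ Zc
      rwa [Equiv.swap_apply_of_ne_of_ne (Ne.symm hXZ) (Ne.symm hYZ)] at this
    have f1 : g₂ * x * g₂⁻¹ = z := by
      have := hg₂ X
      rwa [Equiv.swap_apply_left] at this
    have f3 : g₂ * y * g₂⁻¹ = y := by
      have := hg₂ Y
      rwa [Equiv.swap_apply_of_ne_of_ne (Ne.symm hXY) hYZ] at this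
    have hc : x * y = y * x := hS.1 x hxS y hyS
    apply BSAux.klemma (BSAux.toK x) (BSAux.toK y) (BSAux.toK z) (BSAux.toK g₁) (BSAux.toK g₂)
    · exact fun h => hxy (BSAux.toK_inj h)
    · rw [← map_mul, ← map_mul, hc]
    · rw [← map_inv, ← map_mul, ← map_mul, e1]
    · rw [← map_inv, ← map_mul, ← map_mul, e3]
    · rw [← map_inv, ← map_mul, ← map_mul, f1]
    · rw [← map_inv, ← map_mul, ← map_mul, f3]
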